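/- Let ψ ∈ Ω∞ and k ∈ 𝒦. Then: (i) for every γ ∈ SC_b*([0,∞)), the functional L := γ_k ∘ C is a Banach limit on C_b([0,∞)) (a Cesàro-Banach limit), and τ_{γ,k}(x) = f_{L,k^{−1}}(x) for all x ∈ M₊(ψ); (ii) conversely, for every Cesàro-Banach limit L = γ' ∘ C with γ' ∈ SC_b*([0,∞)), there exists γ ∈ SC_b*([0,∞)) such that f_{L,k^{−1}}(x) = τ_{γ,k}(x) for all x ∈ M₊(ψ). Consequently { τ_{γ,k} : γ ∈ SC_b*([0,∞)) } = { f_{L,k^{−1}} : L a Cesàro-Banach limit } as sets of functionals on M₊(ψ). -/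

import Mathlib

open MeasureTheory Filter Set

noncomputable section

/-- `f` is bounded and continuous on `[0,∞)`, i.e. (the restriction of) `f`
belongs to `C_b([0,∞))`. -/
def IsCb (f : ℝ → ℝ) : Prop :=
  ContinuousOn f (Ici 0) ∧ ∃ M : ℝ, ∀ t ∈ Ici (0:ℝ), |f t| ≤ M

/-- Bounded real sequences, i.e. elements of `ℓ∞(ℕ)`. -/
def IsBddSeq (a : ℕ → ℝ) : Prop := ∃ M : ℝ, ∀ n, |a n| ≤ M

/-- A Banach limit on `C_b([0,∞))`: a positive linear translation-invariant
functional with `L(1) = 1`.  (The underlying map is defined on all of `ℝ → ℝ`;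
the axioms only refer to its values on bounded continuous functions on `[0,∞)`.) -/
structure BanachLimitR where
  toFun : (ℝ → ℝ) → ℝ
  map_add : ∀ f g : ℝ → ℝ, IsCb f → IsCb g →
    toFun (fun t => f t + g t) = toFun f + toFun g
  map_smul : ∀ (c : ℝ) (f : ℝ → ℝ), IsCb f → toFun (fun t => c * f t) = c * toFun f
  pos : ∀ f : ℝ → ℝ, IsCb f → (∀ t ∈ Ici (0:ℝ), 0 ≤ f t) → 0 ≤ toFun f
  map_one : toFun (fun _ => 1) = 1
  shift_inv : ∀ f : ℝ → ℝ, IsCb f → ∀ s : ℝ, 0 ≤ s → toFun (fun t => f (t + s)) = toFun f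

/-- A Banach limit on `ℓ∞(ℕ)`: a positive linear shift-invariant functional
with `L'(1) = 1`. -/
structure BanachLimitN where
  toFun : (ℕ → ℝ) → ℝ
  map_add : ∀ a b : ℕ → ℝ, IsBddSeq a → IsBddSeq b →
    toFun (fun n => a n + b n) = toFun a + toFun b
  map_smul : ∀ (c : ℝ) (a : ℕ → ℝ), IsBddSeq a → toFun (fun n => c * a n) = c * toFun a
  pos : ∀ a : ℕ → ℝ, IsBddSeq a → (∀ n, 0 ≤ a n) → 0 ≤ toFun a
  map_one : toFun (fun _ => 1) = 1
  shift_inv : ∀ a : ℕ → ℝ, IsBddSeq a → toFun (fun n => a (n + 1)) = toFun a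

/-- An element of `SC_b^*([0,∞))`: a positive linear functional on `C_b([0,∞))`
with `γ(1) = 1` vanishing on `C₀([0,∞))`. -/
structure SCbStar where
  toFun : (ℝ → ℝ) → ℝ
  map_add : ∀ f g : ℝ → ℝ, IsCb f → IsCb g →
    toFun (fun t => f t + g t) = toFun f + toFun g
  map_smul : ∀ (c : ℝ) (f : ℝ → ℝ), IsCb f → toFun (fun t => c * f t) = c * toFun f
  pos : ∀ f : ℝ → ℝ, IsCb f → (∀ t ∈ Ici (0:ℝ), 0 ≤ f t) → 0 ≤ toFun f
  map_one : toFun (fun _ => 1) = 1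
  vanish : ∀ f : ℝ → ℝ, IsCb f → Tendsto f atTop (nhds 0) → toFun f = 0

/-- A positive linear functional on `C_b([0,∞))`. -/
structure PosLinFunc where
  toFun : (ℝ → ℝ) → ℝ
  map_add : ∀ f g : ℝ → ℝ, IsCb f → IsCb g →
    toFun (fun t => f t + g t) = toFun f + toFun g
  map_smul : ∀ (c : ℝ) (f : ℝ → ℝ), IsCb f → toFun (fun t => c * f t) = c * toFun f
  pos : ∀ f : ℝ → ℝ, IsCb f → (∀ t ∈ Ici (0:ℝ), 0 ≤ f t) → 0 ≤ toFun f

/-- `ψ ∈ Ω_∞`: concave on `[0,∞)`, nonnegative, `ψ(t) → 0` as `t → 0⁺` and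
`ψ(t) → ∞` as `t → ∞`. -/
def OmegaInf (ψ : ℝ → ℝ) : Prop :=
  ConcaveOn ℝ (Ici 0) ψ ∧ (∀ t ∈ Ici (0:ℝ), 0 ≤ ψ t) ∧
    Tendsto ψ (nhdsWithin 0 (Ioi 0)) (nhds 0) ∧ Tendsto ψ atTop atTop

/-- The decreasing rearrangement `x*` of a measurable function `x` on `[0,∞)`. -/
def decRearr (x : ℝ → ℝ) (t : ℝ) : ℝ :=
  sInf {s : ℝ | 0 ≤ s ∧ volume {u : ℝ | 0 ≤ u ∧ s < |x u|} ≤ ENNReal.ofReal t}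

/-- The weighted mean function `φ(x)(t) = (1/ψ(t)) ∫₀ᵗ x*(s) ds`. -/
def phiW (ψ x : ℝ → ℝ) (t : ℝ) : ℝ := (∫ s in (0:ℝ)..t, decRearr x s) / ψ t

/-- Membership in the Marcinkiewicz space `M(ψ)`. -/
def MemM (ψ x : ℝ → ℝ) : Prop :=
  Measurable x ∧ ∃ M : ℝ, ∀ t > (0:ℝ), phiW ψ x t ≤ M

/-- Membership in the positive cone `M₊(ψ)`. -/
def MemMplus (ψ x : ℝ → ℝ) : Prop := MemM ψ x ∧ ∀ t ∈ Ici (0:ℝ), 0 ≤ x t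

/-- The Marcinkiewicz norm `‖x‖_{M(ψ)} = sup_{t>0} φ(x)(t)`. -/
def MNorm (ψ x : ℝ → ℝ) : ℝ := ⨆ t > (0:ℝ), phiW ψ x t

/-- `κ ∈ 𝒦`: strictly increasing, invertible (as a map of `[0,∞)` onto itself),
differentiable, unbounded, with `κ(0) = 0`. -/
def MemK (κ : ℝ → ℝ) : Prop :=
  StrictMonoOn κ (Ici 0) ∧ κ 0 = 0 ∧ MapsTo κ (Ici 0) (Ici 0) ∧
    SurjOn κ (Ici 0) (Ici 0) ∧ DifferentiableOn ℝ κ (Ici 0) ∧ Tendsto κ atTop atTop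

/-- `f_{L,κ}(x) = L(φ_κ(x))` for a Banach limit `L` on `C_b([0,∞))`; the function
`φ_κ(x)`, bounded and continuous on `(0,∞)`, is fed to `L` as `t ↦ φ_κ(x)(max t 1)`. -/
def fL (L : BanachLimitR) (ψ κ x : ℝ → ℝ) : ℝ :=
  L.toFun fun t => phiW ψ x (κ (max t 1))

/-- `f_{L',κ}(x) = L'({φ(x)(κ(n))}ₙ)` for a Banach limit `L'` on `ℓ∞(ℕ)`. -/
def fLN (L' : BanachLimitN) (ψ κ x : ℝ → ℝ) : ℝ :=
  L'.toFun fun n => phiW ψ x (κ n)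

/-- `κ` has restricted growth with respect to `ψ` (`κ ∈ R(ψ)`): the sequence
`ψ(κ(n))/ψ(κ(n+1))` is almost convergent to `1`. -/
def RestrictedGrowth (ψ κ : ℝ → ℝ) : Prop :=
  ∀ L' : BanachLimitN, L'.toFun (fun n => ψ (κ n) / ψ (κ ((n:ℝ) + 1))) = 1

/-- `κ` has dominated growth with respect to `ψ` (`κ ∈ D(ψ)`):
`(ψ∘κ)'(t)/(ψ∘κ)(t) < C/t` for some `C > 0` and all `t > 0`. -/
def DominatedGrowth (ψ κ : ℝ → ℝ) : Prop :=
  (∀ t > (0:ℝ), DifferentiableAt ℝ (fun u => ψ (κ u)) t) ∧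
    ∃ C > (0:ℝ), ∀ t > (0:ℝ), deriv (fun u => ψ (κ u)) t / ψ (κ t) < C / t

/-- `κ` is of exponential increase: `κ(t + C) > 2κ(t)` for some `C > 0` and all `t > 0`. -/
def ExpIncrease (κ : ℝ → ℝ) : Prop := ∃ C > (0:ℝ), ∀ t > (0:ℝ), 2 * κ t < κ (t + C)

/-- The piecewise linear extension map `p : ℓ∞(ℕ) → C_b([0,∞))`. -/
def plExt (a : ℕ → ℝ) (t : ℝ) : ℝ :=
  a ⌊t⌋₊ + (a (⌊t⌋₊ + 1) - a ⌊t⌋₊) * (t - (⌊t⌋₊ : ℝ))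

/-- The Cesàro mean `C(g)(μ) = (1/μ) ∫₀^μ g(s) ds` (with `C(g)(0) := g(0)`). -/
def cesaro (g : ℝ → ℝ) (μ : ℝ) : ℝ :=
  if μ = 0 then g 0 else (∫ s in (0:ℝ)..μ, g s) / μ

/-- `M_k(g)(λ) = (1/k(λ)) ∫₀^λ g(s) k'(s) ds` (with `M_k(g)(0) := g(0)`). -/
def MkFun (k g : ℝ → ℝ) (l : ℝ) : ℝ :=
  if l = 0 then g 0 else (∫ s in (0:ℝ)..l, g s * deriv k s) / k l

/-- The Connes-Dixmier functional `τ_{γ,k}(x) = γ(M_k(φ(x)))`; the function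
`M_k(φ(x))`, bounded and continuous on `(0,∞)`, is fed to `γ` as `t ↦ M_k(φ(x))(max t 1)`. -/
def tauCD (γ : SCbStar) (ψ k x : ℝ → ℝ) : ℝ :=
  γ.toFun fun t => MkFun k (phiW ψ x) (max t 1)

/-- A set `Λ` of Banach limits has the Cesàro limit property if for each
`g ∈ C_b([0,∞))` both `liminf C(g)` and `limsup C(g)` are attained as values `L(g)`, `L ∈ Λ`. -/
def CesaroLimitProp (Λ : Set BanachLimitR) : Prop :=
  ∀ g : ℝ → ℝ, IsCb g →
    (∃ L ∈ Λ, L.toFun g = liminf (cesaro g) atTop) ∧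
    (∃ L ∈ Λ, L.toFun g = limsup (cesaro g) atTop)

/-- Dilation invariance of an element of `SC_b^*([0,∞))`. -/
def DilationInvariant (ω : SCbStar) : Prop :=
  ∀ g : ℝ → ℝ, IsCb g → ∀ a : ℝ, 0 < a → ω.toFun (fun t => g (a * t)) = ω.toFun g

/-!
Substituting `u = k s` gives `M_k(g)(λ) = C(g ∘ k⁻¹)(k λ)`, so `τ_{γ,k}(x)` is `γ` applied to the
Cesàro mean of `φ(x) ∘ k⁻¹` taken along `k`. Replacing `φ(x) ∘ k⁻¹` by `u ↦ φ(x)(k⁻¹(max u 1))`,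
which agrees with it on `[1, ∞)`, changes its Cesàro mean only by `O(1/μ)`, and every element of
`SC_b^*` ignores such terms. For (i) this identifies `τ_{γ,k}` with `f_{L,k⁻¹}` for
`L = (γ ∘ k) ∘ C`, which is a Banach limit because `C(f(· + s)) - C(f) = O(1/μ)`. For (ii) it
identifies `f_{γ' ∘ C, k⁻¹}` with `τ_{γ,k}` for `γ = γ' ∘ k⁻¹(max · 1)`.
-/

open Function Topology

namespace IsCb

variable {f g : ℝ → ℝ}

lemma congr (hg : IsCb g) (hfg : EqOn f g (Ici 0)) : IsCb f := by
  obtain ⟨hc, M, hM⟩ := hg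
  exact ⟨hc.congr hfg, M, fun t ht => hfg ht ▸ hM t ht⟩

lemma add (hf : IsCb f) (hg : IsCb g) : IsCb fun t => f t + g t := by
  obtain ⟨hfc, Mf, hMf⟩ := hf
  obtain ⟨hgc, Mg, hMg⟩ := hg
  exact ⟨hfc.add hgc, Mf + Mg, fun t ht =>
    (abs_add_le _ _).trans (add_le_add (hMf t ht) (hMg t ht))⟩

lemma sub (hf : IsCb f) (hg : IsCb g) : IsCb fun t => f t - g t := by
  obtain ⟨hfc, Mf, hMf⟩ := hf
  obtain ⟨hgc, Mg, hMg⟩ := hg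
  exact ⟨hfc.sub hgc, Mf + Mg, fun t ht =>
    (abs_sub _ _).trans (add_le_add (hMf t ht) (hMg t ht))⟩

lemma comp {m : ℝ → ℝ} (hf : IsCb f) (hm : ContinuousOn m (Ici 0))
    (hmaps : MapsTo m (Ici 0) (Ici 0)) : IsCb fun t => f (m t) := by
  obtain ⟨hc, M, hM⟩ := hf
  exact ⟨hc.comp hm hmaps, M, fun t ht => hM _ (hmaps ht)⟩

lemma comp_add_const (hf : IsCb f) {s : ℝ} (hs : 0 ≤ s) : IsCb fun t => f (t + s) :=
  hf.comp (continuous_add_const s).continuousOn fun t (ht : 0 ≤ t) => by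
    simp only [mem_Ici]; linarith

lemma intervalIntegrable (hf : IsCb f) {a b : ℝ} (ha : 0 ≤ a) (hb : 0 ≤ b) :
    IntervalIntegrable f volume a b :=
  (hf.1.mono fun _ ht => le_trans (le_min ha hb) ht.1).intervalIntegrable

lemma abs_integral_le (hf : IsCb f) : ∃ M, ∀ a b : ℝ, 0 ≤ a → 0 ≤ b →
    |∫ t in a..b, f t| ≤ M * |b - a| := by
  obtain ⟨M, hM⟩ := hf.2
  refine ⟨M, fun a b ha hb => ?_⟩
  have := intervalIntegral.norm_integral_le_of_norm_le_const (f := f) (C := M)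
    fun t ht => (Real.norm_eq_abs _).symm ▸ hM t (le_trans (le_min ha hb) ht.1.le)
  rwa [Real.norm_eq_abs] at this

end IsCb

namespace SCbStar

variable (γ : SCbStar) {F G : ℝ → ℝ}

lemma toFun_eq_of_tendsto_sub (hF : IsCb F) (hG : IsCb G)
    (h : Tendsto (fun t => F t - G t) atTop (𝓝 0)) : γ.toFun F = γ.toFun G := by
  have hsplit := γ.map_add _ _ (hF.sub hG) hG
  simp only [sub_add_cancel] at hsplit
  rw [hsplit, γ.vanish _ (hF.sub hG) h, zero_add]

lemma toFun_congr (hG : IsCb G) (hFG : EqOn F G (Ici 0)) : γ.toFun F = γ.toFun G := by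
  refine γ.toFun_eq_of_tendsto_sub (hG.congr hFG) hG (tendsto_const_nhds.congr' ?_)
  filter_upwards [eventually_ge_atTop 0] with t ht
  rw [hFG ht, sub_self]

def comp (m : ℝ → ℝ) (hm : ContinuousOn m (Ici 0)) (hmaps : MapsTo m (Ici 0) (Ici 0))
    (htend : Tendsto m atTop atTop) : SCbStar where
  toFun h := γ.toFun fun t => h (m t)
  map_add _ _ hf hg := γ.map_add _ _ (hf.comp hm hmaps) (hg.comp hm hmaps)
  map_smul c _ hf := γ.map_smul c _ (hf.comp hm hmaps)
  pos _ hf h0 := γ.pos _ (hf.comp hm hmaps) fun _ ht => h0 _ (hmaps ht)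
  map_one := γ.map_one
  vanish _ hf hlim := γ.vanish _ (hf.comp hm hmaps) (hlim.comp htend)

end SCbStar

section Cesaro

variable {f g : ℝ → ℝ} {M μ : ℝ}

lemma cesaro_eq_integral_comp_mul (f : ℝ → ℝ) (μ : ℝ) :
    cesaro f μ = ∫ s in (0:ℝ)..1, f (μ * s) := by
  by_cases hμ : μ = 0
  · simp [cesaro, hμ]
  · rw [intervalIntegral.integral_comp_mul_left f hμ, cesaro, if_neg hμ, mul_zero, mul_one,
      smul_eq_mul, div_eq_inv_mul]

lemma cesaro_const (c : ℝ) : cesaro (fun _ => c) = fun _ => c := by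
  ext μ
  simp [cesaro_eq_integral_comp_mul]

lemma cesaro_const_mul (c : ℝ) (f : ℝ → ℝ) :
    cesaro (fun t => c * f t) = fun μ => c * cesaro f μ := by
  ext μ
  simp only [cesaro_eq_integral_comp_mul, intervalIntegral.integral_const_mul]

lemma cesaro_add (hf : IntervalIntegrable f volume 0 μ)
    (hg : IntervalIntegrable g volume 0 μ) :
    cesaro (fun t => f t + g t) μ = cesaro f μ + cesaro g μ := by
  unfold cesaro
  split_ifs
  · rfl
  · rw [intervalIntegral.integral_add hf hg, add_div]

lemma cesaro_nonneg (hf : ∀ t ∈ Ici (0:ℝ), 0 ≤ f t) (hμ : 0 ≤ μ) : 0 ≤ cesaro f μ := by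
  rw [cesaro_eq_integral_comp_mul]
  exact intervalIntegral.integral_nonneg zero_le_one fun s hs => hf _ (mul_nonneg hμ hs.1)

lemma abs_cesaro_le (hf : ∀ t > 0, |f t| ≤ M) (hμ : 0 < μ) : |cesaro f μ| ≤ M := by
  rw [cesaro_eq_integral_comp_mul]
  have := intervalIntegral.norm_integral_le_of_norm_le_const (a := 0) (b := 1)
    (f := fun s => f (μ * s)) (C := M) fun s hs => by
      rw [uIoc_of_le zero_le_one] at hs
      exact (Real.norm_eq_abs _).symm ▸ hf _ (mul_pos hμ hs.1)
  simpa using this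

lemma intervalIntegrable_of_continuousOn_Ioi (hfc : ContinuousOn f (Ioi 0))
    (hfb : ∀ t > 0, |f t| ≤ M) {b : ℝ} (hb : 0 ≤ b) : IntervalIntegrable f volume 0 b := by
  rw [intervalIntegrable_iff_integrableOn_Ioc_of_le hb]
  exact Integrable.mono' (integrableOn_const measure_Ioc_lt_top.ne)
    ((hfc.mono Ioc_subset_Ioi_self).aestronglyMeasurable measurableSet_Ioc)
    (ae_restrict_of_forall_mem measurableSet_Ioc fun t ht =>
      (Real.norm_eq_abs _).symm ▸ hfb t ht.1)

lemma continuousOn_primitive_Ici (hf : ∀ b ≥ 0, IntervalIntegrable f volume 0 b) :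
    ContinuousOn (fun b => ∫ s in (0:ℝ)..b, f s) (Ici 0) := by
  intro t ht
  have hIcc : uIcc 0 (t + 1) ∈ 𝓝[Ici 0] t := by
    rw [uIcc_of_le (by linarith [mem_Ici.mp ht]), ← Ici_inter_Iic]
    exact inter_mem_nhdsWithin _ (Iic_mem_nhds (by linarith))
  exact ((intervalIntegral.continuousOn_primitive_interval'
    (hf _ (by linarith [mem_Ici.mp ht])) left_mem_uIcc).continuousWithinAt
    (mem_of_mem_nhdsWithin ht hIcc)).mono_of_mem_nhdsWithin hIcc

lemma continuousOn_cesaro_Ioi (hf : ∀ b ≥ 0, IntervalIntegrable f volume 0 b) :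
    ContinuousOn (cesaro f) (Ioi 0) :=
  ((continuousOn_primitive_Ici hf).mono Ioi_subset_Ici_self).div continuousOn_id
    (fun _ ht => ne_of_gt ht) |>.congr fun _ hμ => if_neg (ne_of_gt hμ)

lemma IsCb.cesaro (hf : IsCb f) : IsCb (cesaro f) := by
  obtain ⟨hc, M, hM⟩ := hf
  have hcont : Continuous fun μ => ∫ s in (0:ℝ)..1, f (max (μ * s) 0) :=
    intervalIntegral.continuous_parametric_intervalIntegral_of_continuous'
      (f := fun μ s => f (max (μ * s) 0))
      (hc.comp_continuous (by fun_prop) fun _ => mem_Ici.mpr (le_max_right _ _)) 0 1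
  refine ⟨hcont.continuousOn.congr fun μ hμ => ?_, M, fun μ hμ => ?_⟩
  · rw [cesaro_eq_integral_comp_mul]
    refine intervalIntegral.integral_congr fun s hs => ?_
    rw [uIcc_of_le zero_le_one] at hs
    simp only [max_eq_left (mul_nonneg (mem_Ici.mp hμ) hs.1)]
  · rcases (mem_Ici.mp hμ).eq_or_lt with rfl | hμ
    · simpa [_root_.cesaro] using hM 0 (mem_Ici.mpr le_rfl)
    · exact abs_cesaro_le (fun t ht => hM t ht.le) hμ

lemma tendsto_cesaro_comp_add_const_sub (hf : IsCb f) {s : ℝ} (hs : 0 ≤ s) :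
    Tendsto (fun μ => cesaro (fun t => f (t + s)) μ - cesaro f μ) atTop (𝓝 0) := by
  obtain ⟨M, hM⟩ := hf.abs_integral_le
  refine squeeze_zero_norm' ?_ ((tendsto_const_nhds (x := 2 * (M * s))).div_atTop tendsto_id)
  filter_upwards [eventually_gt_atTop 0] with μ hμ
  have hint := fun a b (ha : (0:ℝ) ≤ a) (hb : 0 ≤ b) => hf.intervalIntegrable ha hb
  rw [cesaro, cesaro, if_neg hμ.ne', if_neg hμ.ne', div_sub_div_same, Real.norm_eq_abs,
    abs_div, abs_of_pos hμ, intervalIntegral.integral_comp_add_right, zero_add,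
    intervalIntegral.integral_interval_sub_interval_comm' (hint _ _ hs (by linarith))
      (hint _ _ le_rfl hμ.le) (hint _ _ hs le_rfl)]
  refine div_le_div_of_nonneg_right ?_ hμ.le
  calc |(∫ t in μ..μ + s, f t) - ∫ t in (0:ℝ)..s, f t|
      ≤ |∫ t in μ..μ + s, f t| + |∫ t in (0:ℝ)..s, f t| := abs_sub _ _
    _ ≤ M * |μ + s - μ| + M * |s - 0| :=
        add_le_add (hM _ _ hμ.le (by linarith)) (hM _ _ le_rfl hs)
    _ = 2 * (M * s) := by rw [add_sub_cancel_left, sub_zero, abs_of_nonneg hs]; ring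

lemma tendsto_cesaro_sub_cesaro_of_eqOn {a : ℝ} (ha : 0 ≤ a)
    (hf : ∀ b ≥ 0, IntervalIntegrable f volume 0 b)
    (hg : ∀ b ≥ 0, IntervalIntegrable g volume 0 b) (hfg : EqOn f g (Ici a)) :
    Tendsto (fun μ => cesaro f μ - cesaro g μ) atTop (𝓝 0) := by
  refine ((tendsto_const_nhds (x := (∫ s in (0:ℝ)..a, f s) - ∫ s in (0:ℝ)..a, g s)).div_atTop
    tendsto_id).congr' ?_
  filter_upwards [eventually_ge_atTop a, eventually_gt_atTop 0] with μ haμ hμ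
  have htail : ∫ s in a..μ, f s = ∫ s in a..μ, g s :=
    intervalIntegral.integral_congr fun s hs => hfg (by rw [uIcc_of_le haμ] at hs; exact hs.1)
  rw [cesaro, cesaro, if_neg hμ.ne', if_neg hμ.ne', div_sub_div_same, id,
    ← intervalIntegral.integral_add_adjacent_intervals (hf a ha)
      ((hf a ha).symm.trans (hf μ hμ.le)),
    ← intervalIntegral.integral_add_adjacent_intervals (hg a ha)
      ((hg a ha).symm.trans (hg μ hμ.le)), htail]
  ring

end Cesaro

def SCbStar.cesaroBanachLimit (γ : SCbStar) : BanachLimitR where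
  toFun f := γ.toFun (cesaro f)
  map_add f g hf hg := by
    rw [← γ.map_add _ _ hf.cesaro hg.cesaro]
    exact γ.toFun_congr (hf.cesaro.add hg.cesaro) fun μ hμ =>
      cesaro_add (hf.intervalIntegrable le_rfl hμ) (hg.intervalIntegrable le_rfl hμ)
  map_smul c f hf := by
    simp only [cesaro_const_mul]
    exact γ.map_smul c _ hf.cesaro
  pos _ hf h0 := γ.pos _ hf.cesaro fun _ hμ => cesaro_nonneg h0 hμ
  map_one := by simp only [cesaro_const]; exact γ.map_one
  shift_inv f hf s hs := γ.toFun_eq_of_tendsto_sub (hf.comp_add_const hs).cesaro hf.cesaro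
    (tendsto_cesaro_comp_add_const_sub hf hs)

namespace MemK

variable {k : ℝ → ℝ} {t y : ℝ}

lemma continuousOn (hk : MemK k) : ContinuousOn k (Ici 0) := hk.2.2.2.2.1.continuousOn

lemma pos (hk : MemK k) (ht : 0 < t) : 0 < k t := by
  simpa [hk.2.1] using hk.1 (mem_Ici.mpr le_rfl) (mem_Ici.mpr ht.le) ht

lemma apply_invFunOn (hk : MemK k) (hy : 0 ≤ y) : k (invFunOn k (Ici 0) y) = y :=
  invFunOn_eq (hk.2.2.2.1 hy)

lemma invFunOn_nonneg (hk : MemK k) (hy : 0 ≤ y) : 0 ≤ invFunOn k (Ici 0) y :=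
  invFunOn_mem (hk.2.2.2.1 hy)

lemma invFunOn_apply (hk : MemK k) (ht : 0 ≤ t) : invFunOn k (Ici 0) (k t) = t :=
  hk.1.injOn.leftInvOn_invFunOn ht

lemma invFunOn_pos (hk : MemK k) (hy : 0 < y) : 0 < invFunOn k (Ici 0) y :=
  (hk.invFunOn_nonneg hy.le).lt_of_ne fun h =>
    hy.ne' (by rw [← hk.apply_invFunOn hy.le, ← h, hk.2.1])

lemma monotoneOn_invFunOn (hk : MemK k) : MonotoneOn (invFunOn k (Ici 0)) (Ici 0) :=
  fun _ ha _ hb hab => (hk.1.le_iff_le (hk.invFunOn_nonneg ha) (hk.invFunOn_nonneg hb)).mp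
    (by rwa [hk.apply_invFunOn ha, hk.apply_invFunOn hb])

lemma continuousAt_invFunOn (hk : MemK k) (hy : 0 < y) :
    ContinuousAt (invFunOn k (Ici 0)) y :=
  continuousAt_of_monotoneOn_of_image_mem_nhds (hk.monotoneOn_invFunOn.mono Ioi_subset_Ici_self)
    (Ioi_mem_nhds hy) (mem_of_superset (Ioi_mem_nhds (hk.invFunOn_pos hy))
      fun z (hz : 0 < z) => ⟨k z, hk.pos hz, hk.invFunOn_apply hz.le⟩)

lemma tendsto_invFunOn (hk : MemK k) : Tendsto (invFunOn k (Ici 0)) atTop atTop := by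
  refine tendsto_atTop.2 fun b => (eventually_ge_atTop (k (max b 0))).mono fun y hy => ?_
  have hb : (0:ℝ) ≤ max b 0 := le_max_right b 0
  calc b ≤ max b 0 := le_max_left b 0
    _ = invFunOn k (Ici 0) (k (max b 0)) := (hk.invFunOn_apply hb).symm
    _ ≤ invFunOn k (Ici 0) y :=
      hk.monotoneOn_invFunOn (hk.2.2.1 hb) ((hk.2.2.1 hb).trans hy) hy

lemma invFunOn_max_pos (hk : MemK k) (μ : ℝ) : 0 < invFunOn k (Ici 0) (max μ 1) :=
  hk.invFunOn_pos (zero_lt_one.trans_le (le_max_right μ 1))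

lemma continuous_invFunOn_max (hk : MemK k) :
    Continuous fun μ => invFunOn k (Ici 0) (max μ 1) :=
  continuous_iff_continuousAt.mpr fun μ =>
    (hk.continuousAt_invFunOn (zero_lt_one.trans_le (le_max_right μ 1))).comp
      (f := fun μ => max μ 1) (continuous_id.max continuous_const).continuousAt

lemma hasDerivAt (hk : MemK k) (ht : 0 < t) : HasDerivAt k (deriv k t) t :=
  ((hk.2.2.2.2.1 t ht.le).differentiableAt (Ici_mem_nhds ht)).hasDerivAt

lemma deriv_nonneg (hk : MemK k) (ht : 0 < t) : 0 ≤ deriv k t := by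
  rw [← derivWithin_of_mem_nhds (Ici_mem_nhds ht)]
  exact hk.1.monotoneOn.derivWithin_nonneg

lemma MkFun_eq_cesaro (hk : MemK k) (g : ℝ → ℝ) {l : ℝ} (hl : 0 < l) :
    MkFun k g l = cesaro (fun u => g (invFunOn k (Ici 0) u)) (k l) := by
  have hsubst := intervalIntegral.integral_comp_mul_deriv_of_deriv_nonneg
    (g := fun u => g (invFunOn k (Ici 0) u)) (a := 0) (b := l)
    (hk.continuousOn.mono fun s hs => by rw [uIcc_of_le hl.le] at hs; exact hs.1)
    (fun s hs => hk.hasDerivAt (by simpa [hl.le] using hs.1))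
    (fun s hs => hk.deriv_nonneg (by simpa [hl.le] using hs.1))
  rw [hk.2.1] at hsubst
  rw [MkFun, if_neg hl.ne', cesaro, if_neg (hk.pos hl).ne', ← hsubst]
  congr 1
  refine intervalIntegral.integral_congr fun s hs => ?_
  rw [uIcc_of_le hl.le] at hs
  simp only [comp_apply, hk.invFunOn_apply hs.1]

end MemK

namespace OmegaInf

variable {ψ : ℝ → ℝ}

lemma continuousOn (hψ : OmegaInf ψ) : ContinuousOn ψ (Ioi 0) := by
  simpa using hψ.1.continuousOn_interior

lemma pos (hψ : OmegaInf ψ) {t : ℝ} (ht : 0 < t) : 0 < ψ t := by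
  obtain ⟨T, hT1, htT⟩ := ((hψ.2.2.2.eventually_ge_atTop 1).and (eventually_gt_atTop t)).exists
  have hT : 0 < T := ht.trans htT
  have hb : t / T ≤ 1 := (div_le_one hT).mpr htT.le
  -- concavity at `t = (1 - t/T) • 0 + (t/T) • T`
  have hconc := hψ.1.2 (mem_Ici.mpr le_rfl) hT.le (sub_nonneg.mpr hb) (div_pos ht hT).le
    (sub_add_cancel 1 (t / T))
  simp only [smul_eq_mul, mul_zero, zero_add, div_mul_cancel₀ t hT.ne'] at hconc
  have h0 : 0 ≤ (1 - t / T) * ψ 0 :=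
    mul_nonneg (sub_nonneg.mpr hb) (hψ.2.1 0 (mem_Ici.mpr le_rfl))
  have hT' : 0 < t / T * ψ T := mul_pos (div_pos ht hT) (by linarith)
  linarith

end OmegaInf

section DecRearr

variable {x : ℝ → ℝ} {m t t' : ℝ}

def decRearrSet (x : ℝ → ℝ) (t : ℝ) : Set ℝ :=
  {s : ℝ | 0 ≤ s ∧ volume {u : ℝ | 0 ≤ u ∧ s < |x u|} ≤ ENNReal.ofReal t}

lemma decRearr_nonneg (x : ℝ → ℝ) (t : ℝ) : 0 ≤ decRearr x t :=
  Real.sInf_nonneg fun _ hs => hs.1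

lemma decRearrSet_mono (x : ℝ → ℝ) : Monotone (decRearrSet x) :=
  fun _ _ h _ hs => ⟨hs.1, hs.2.trans (ENNReal.ofReal_le_ofReal h)⟩

lemma decRearr_le_of_le (hne : (decRearrSet x t).Nonempty) (h : t ≤ t') :
    decRearr x t' ≤ decRearr x t :=
  csInf_le_csInf ⟨0, fun _ hs => hs.1⟩ hne (decRearrSet_mono x h)

lemma decRearr_eq_zero (h : ¬(decRearrSet x t).Nonempty) : decRearr x t = 0 := by
  rw [not_nonempty_iff_eq_empty] at h
  exact (congrArg sInf h).trans Real.sInf_empty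

lemma measurable_decRearr (x : ℝ → ℝ) : Measurable (decRearr x) := by
  refine measurable_of_Ioi fun a => Set.OrdConnected.measurableSet ⟨fun t ht u hu v hv => ?_⟩
  simp only [mem_preimage, mem_Ioi] at ht hu ⊢
  rcases lt_or_ge a 0 with ha | ha
  · exact ha.trans_le (decRearr_nonneg x v)
  · by_cases hne : (decRearrSet x v).Nonempty
    · exact hu.trans_le (decRearr_le_of_le hne hv.2)
    · refine absurd ht (not_lt.mpr ?_)
      rw [decRearr_eq_zero fun h => hne (h.mono (decRearrSet_mono x hv.1))]
      exact ha

lemma integrableOn_decRearr (hne : (decRearrSet x m).Nonempty) (b : ℝ) :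
    IntegrableOn (decRearr x) (Icc m b) :=
  Integrable.mono' (integrableOn_const (C := decRearr x m) measure_Icc_lt_top.ne)
    (measurable_decRearr x).aestronglyMeasurable.restrict
    (ae_restrict_of_forall_mem measurableSet_Icc fun s hs => by
      rw [Real.norm_eq_abs, abs_of_nonneg (decRearr_nonneg x s)]
      exact decRearr_le_of_le hne hs.1)

/-- `x*` is antitone where it is finite, so it can only fail to be integrable near `0`, and then
it vanishes wherever its primitive is defined. -/
lemma integral_decRearr_eq_zero {b : ℝ} (hb : 0 ≤ b)
    (hnot : ¬IntervalIntegrable (decRearr x) volume 0 b) (ht : 0 ≤ t) :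
    ∫ s in (0:ℝ)..t, decRearr x s = 0 := by
  by_cases hint : IntervalIntegrable (decRearr x) volume 0 t
  swap
  · exact intervalIntegral.integral_undef hint
  have hzero : ∀ m ∈ Ioo 0 t, decRearr x m = 0 := fun m hm =>
    decRearr_eq_zero fun hne => hnot <| by
      rcases le_total b t with hbt | htb
      · exact hint.mono_set (uIcc_subset_uIcc_left (by rw [uIcc_of_le ht]; exact ⟨hb, hbt⟩))
      · refine hint.trans (IntegrableOn.intervalIntegrable ?_)
        rw [uIcc_of_le htb]
        exact (integrableOn_decRearr hne b).mono_set (Icc_subset_Icc hm.2.le le_rfl)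
  rw [intervalIntegral.integral_of_le ht, integral_Ioc_eq_integral_Ioo]
  exact setIntegral_eq_zero_of_forall_eq_zero hzero

lemma continuousOn_primitive_decRearr (x : ℝ → ℝ) :
    ContinuousOn (fun t => ∫ s in (0:ℝ)..t, decRearr x s) (Ici 0) := by
  by_cases hint : ∀ b ≥ 0, IntervalIntegrable (decRearr x) volume 0 b
  · exact continuousOn_primitive_Ici hint
  · obtain ⟨b, hb, hnot⟩ := not_forall₂.mp hint
    exact continuousOn_const.congr fun t ht => integral_decRearr_eq_zero hb hnot ht

end DecRearr

section Phi

variable {ψ : ℝ → ℝ}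

lemma continuousOn_phiW (hψ : OmegaInf ψ) (x : ℝ → ℝ) : ContinuousOn (phiW ψ x) (Ioi 0) :=
  ((continuousOn_primitive_decRearr x).mono Ioi_subset_Ici_self).div hψ.continuousOn
    fun _ ht => (hψ.pos ht).ne'

lemma abs_phiW_le (hψ : OmegaInf ψ) {x : ℝ → ℝ} {M : ℝ} (hM : ∀ t > (0:ℝ), phiW ψ x t ≤ M)
    {t : ℝ} (ht : 0 < t) : |phiW ψ x t| ≤ M := by
  have hnonneg : 0 ≤ phiW ψ x t := div_nonneg
    (intervalIntegral.integral_nonneg ht.le fun u _ => decRearr_nonneg x u) (hψ.pos ht).le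
  exact (abs_of_nonneg hnonneg).symm ▸ hM t ht

end Phi

namespace MemK

variable {k g : ℝ → ℝ} {M : ℝ}

lemma continuousOn_comp_invFunOn (hk : MemK k) (hgc : ContinuousOn g (Ioi 0)) :
    ContinuousOn (fun u => g (invFunOn k (Ici 0) u)) (Ioi 0) := fun _ hu =>
  (hgc.continuousAt (Ioi_mem_nhds (hk.invFunOn_pos hu))).comp_continuousWithinAt
    (hk.continuousAt_invFunOn hu).continuousWithinAt

lemma intervalIntegrable_comp_invFunOn (hk : MemK k) (hgc : ContinuousOn g (Ioi 0))
    (hgb : ∀ t > 0, |g t| ≤ M) {b : ℝ} (hb : 0 ≤ b) :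
    IntervalIntegrable (fun u => g (invFunOn k (Ici 0) u)) volume 0 b :=
  intervalIntegrable_of_continuousOn_Ioi (hk.continuousOn_comp_invFunOn hgc)
    (fun _ hu => hgb _ (hk.invFunOn_pos hu)) hb

lemma continuous_comp_invFunOn_max (hk : MemK k) (hgc : ContinuousOn g (Ioi 0)) :
    Continuous fun u => g (invFunOn k (Ici 0) (max u 1)) :=
  hgc.comp_continuous hk.continuous_invFunOn_max hk.invFunOn_max_pos

lemma isCb_comp_invFunOn_max (hk : MemK k) (hgc : ContinuousOn g (Ioi 0))
    (hgb : ∀ t > 0, |g t| ≤ M) : IsCb fun u => g (invFunOn k (Ici 0) (max u 1)) :=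
  ⟨(hk.continuous_comp_invFunOn_max hgc).continuousOn, M,
    fun _ _ => hgb _ (hk.invFunOn_max_pos _)⟩

lemma isCb_MkFun_max (hk : MemK k) (hgc : ContinuousOn g (Ioi 0))
    (hgb : ∀ t > 0, |g t| ≤ M) : IsCb fun t => MkFun k g (max t 1) := by
  have hpos : ∀ t : ℝ, 0 < k (max t 1) := fun t =>
    hk.pos (zero_lt_one.trans_le (le_max_right t 1))
  have hMk : ∀ t, MkFun k g (max t 1) =
      cesaro (fun u => g (invFunOn k (Ici 0) u)) (k (max t 1)) := fun t =>
    hk.MkFun_eq_cesaro g (zero_lt_one.trans_le (le_max_right t 1))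
  refine ⟨Continuous.continuousOn ?_, M, fun t _ => ?_⟩
  · simp only [hMk]
    exact (continuousOn_cesaro_Ioi fun _ hb => hk.intervalIntegrable_comp_invFunOn hgc hgb hb)
      |>.comp_continuous (hk.continuousOn.comp_continuous (continuous_id.max continuous_const)
        fun t => mem_Ici.mpr (zero_le_one.trans (le_max_right t 1))) hpos
  · simpa only [hMk] using abs_cesaro_le (fun _ hu => hgb _ (hk.invFunOn_pos hu)) (hpos t)

lemma tendsto_cesaro_comp_invFunOn_sub (hk : MemK k) (hgc : ContinuousOn g (Ioi 0))
    (hgb : ∀ t > 0, |g t| ≤ M) :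
    Tendsto (fun μ => cesaro (fun u => g (invFunOn k (Ici 0) u)) μ
      - cesaro (fun u => g (invFunOn k (Ici 0) (max u 1))) μ) atTop (𝓝 0) :=
  tendsto_cesaro_sub_cesaro_of_eqOn zero_le_one
    (fun _ hb => hk.intervalIntegrable_comp_invFunOn hgc hgb hb)
    (fun _ _ => (hk.continuous_comp_invFunOn_max hgc).intervalIntegrable _ _)
    (fun u (hu : 1 ≤ u) => by simp only [max_eq_left hu])

lemma tendsto_MkFun_max_sub_cesaro (hk : MemK k) (hgc : ContinuousOn g (Ioi 0))
    (hgb : ∀ t > 0, |g t| ≤ M) :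
    Tendsto (fun t => MkFun k g (max t 1)
      - cesaro (fun u => g (invFunOn k (Ici 0) (max u 1))) (k t)) atTop (𝓝 0) := by
  refine ((hk.tendsto_cesaro_comp_invFunOn_sub hgc hgb).comp hk.2.2.2.2.2).congr' ?_
  filter_upwards [eventually_ge_atTop 1] with t ht
  rw [comp_apply, max_eq_left ht, hk.MkFun_eq_cesaro g (zero_lt_one.trans_le ht)]

lemma tendsto_cesaro_sub_MkFun_max_invFunOn (hk : MemK k) (hgc : ContinuousOn g (Ioi 0))
    (hgb : ∀ t > 0, |g t| ≤ M) :
    Tendsto (fun μ => cesaro (fun u => g (invFunOn k (Ici 0) (max u 1))) μ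
      - MkFun k g (max (invFunOn k (Ici 0) (max μ 1)) 1)) atTop (𝓝 0) := by
  refine (neg_zero (G := ℝ) ▸ (hk.tendsto_cesaro_comp_invFunOn_sub hgc hgb).neg).congr' ?_
  filter_upwards [eventually_ge_atTop (max (k 1) 1)] with μ hμ
  have hμ0 : 0 ≤ μ := zero_le_one.trans ((le_max_right _ _).trans hμ)
  have hinv : 1 ≤ invFunOn k (Ici 0) μ := by
    simpa only [hk.invFunOn_apply zero_le_one] using hk.monotoneOn_invFunOn
      (hk.2.2.1 (mem_Ici.mpr zero_le_one)) hμ0 ((le_max_left _ _).trans hμ)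
  rw [max_eq_left ((le_max_right _ _).trans hμ), max_eq_left hinv,
    hk.MkFun_eq_cesaro g (zero_lt_one.trans_le hinv), hk.apply_invFunOn hμ0, neg_sub]

end MemK

/-- the Connes-Dixmier functionals `τ_{γ,k}` on `M₊(ψ)` are
exactly the functionals `f_{L,k⁻¹}` with `L = γ_k ∘ C` a Cesàro-Banach limit. -/
theorem connesDixmier_eq_cesaroBanach (ψ k : ℝ → ℝ) (hψ : OmegaInf ψ) (hk : MemK k) :
    (∀ γ : SCbStar, ∃ L : BanachLimitR,
      (∀ f : ℝ → ℝ, L.toFun f = γ.toFun fun t => cesaro f (k t)) ∧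
      ∀ x : ℝ → ℝ, MemMplus ψ x →
        tauCD γ ψ k x = fL L ψ (fun y => Function.invFunOn k (Ici 0) y) x) ∧
    (∀ γ' : SCbStar, ∀ L : BanachLimitR,
      (∀ f : ℝ → ℝ, L.toFun f = γ'.toFun (cesaro f)) →
      ∃ γ : SCbStar, ∀ x : ℝ → ℝ, MemMplus ψ x →
        fL L ψ (fun y => Function.invFunOn k (Ici 0) y) x = tauCD γ ψ k x) := by
  have hm_maps : MapsTo (fun μ => invFunOn k (Ici 0) (max μ 1)) (Ici 0) (Ici 0) :=
    fun μ _ => (hk.invFunOn_max_pos μ).le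
  have hm_tendsto : Tendsto (fun μ => invFunOn k (Ici 0) (max μ 1)) atTop atTop :=
    hk.tendsto_invFunOn.comp (tendsto_atTop_mono (fun μ => le_max_left μ 1) tendsto_id)
  refine ⟨fun γ => ⟨(γ.comp k hk.continuousOn hk.2.2.1 hk.2.2.2.2.2).cesaroBanachLimit,
    fun f => rfl, fun x hx => ?_⟩, fun γ' L hL =>
    ⟨γ'.comp _ hk.continuous_invFunOn_max.continuousOn hm_maps hm_tendsto, fun x hx => ?_⟩⟩
  all_goals
    obtain ⟨M, hM⟩ := hx.1.2
    have hφc := continuousOn_phiW hψ x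
    have hφb := fun t (ht : t > 0) => abs_phiW_le hψ hM ht
  · exact γ.toFun_eq_of_tendsto_sub (hk.isCb_MkFun_max hφc hφb)
      ((hk.isCb_comp_invFunOn_max hφc hφb).cesaro.comp hk.continuousOn hk.2.2.1)
      (hk.tendsto_MkFun_max_sub_cesaro hφc hφb)
  · rw [fL, hL]
    exact γ'.toFun_eq_of_tendsto_sub (hk.isCb_comp_invFunOn_max hφc hφb).cesaro
      ((hk.isCb_MkFun_max hφc hφb).comp hk.continuous_invFunOn_max.continuousOn hm_maps)
      (hk.tendsto_cesaro_sub_MkFun_max_invFunOn hφc hφb)
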